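/- Define Ψ_m := δ ∘ Φ ∘ t_{−mΘ} ∘ δ ∘ Φ on M = ℝ × L × ℝ (the cohomological action of E ↦ Φ(Φ(E)^∨ ⊗ O(−mΘ))^∨). Then for every v = (n, D, s) ∈ M and every m ∈ ℝ, writing d = ⟨f,D⟩, c = ⟨Θ,D⟩ and r = n − m·d, we have Ψ_m(v) = (r, D', s) where D' ∈ L satisfies ⟨f,D'⟩ = d and ⟨Θ,D'⟩ = c − m(s + e·r) − (e/2)·d·m²; in particular the Chern character table of Ψ_m(v) is (r, d, c − m(s + e·r) − (e/2)dm², s). -/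
import Mathlib


/-- Cohomological relative Fourier–Mukai transform `Φ` on `M = ℝ × L × ℝ`. -/
noncomputable def PhiFM {L : Type*} [AddCommGroup L] [Module ℝ L] (e : ℝ)
    (B : L →ₗ[ℝ] L →ₗ[ℝ] ℝ) (Θ f : L) (v : ℝ × L × ℝ) : ℝ × L × ℝ :=
  (B f v.2.1,
    -v.2.1 + (B f v.2.1 - v.1) • Θ +
      (B Θ v.2.1 + e / 2 * B f v.2.1 + v.2.2) • f,
    -(B Θ v.2.1 + e * B f v.2.1 - e / 2 * v.1))

/-- Twist by a class `L₀` (tensoring by a line bundle of class `L₀`). -/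
noncomputable def twistFM {L : Type*} [AddCommGroup L] [Module ℝ L]
    (B : L →ₗ[ℝ] L →ₗ[ℝ] ℝ) (L₀ : L) (v : ℝ × L × ℝ) : ℝ × L × ℝ :=
  (v.1, v.2.1 + v.1 • L₀, v.2.2 + B L₀ v.2.1 + v.1 / 2 * B L₀ L₀)

/-- The dual map `δ(n,D,s) = (n, −D, s)`. -/
noncomputable def dualFM {L : Type*} [AddCommGroup L] [Module ℝ L]
    (v : ℝ × L × ℝ) : ℝ × L × ℝ :=
  (v.1, -v.2.1, v.2.2)

/-- `Ψ_m = δ ∘ Φ ∘ t_{−mΘ} ∘ δ ∘ Φ`. -/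
noncomputable def PsiFM {L : Type*} [AddCommGroup L] [Module ℝ L] (e : ℝ)
    (B : L →ₗ[ℝ] L →ₗ[ℝ] ℝ) (Θ f : L) (m : ℝ) (v : ℝ × L × ℝ) : ℝ × L × ℝ :=
  dualFM (PhiFM e B Θ f (twistFM B ((-m) • Θ) (dualFM (PhiFM e B Θ f v))))

theorem stmt11 (e : ℝ) {L : Type*} [AddCommGroup L] [Module ℝ L]
    (B : L →ₗ[ℝ] L →ₗ[ℝ] ℝ) (hsymm : ∀ x y : L, B x y = B y x)
    (Θ f : L) (hΘΘ : B Θ Θ = -e) (hΘf : B Θ f = 1) (hff : B f f = 0) :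
    ∀ (v : ℝ × L × ℝ) (m : ℝ),
      (PsiFM e B Θ f m v).1 = v.1 - m * B f v.2.1 ∧
      (PsiFM e B Θ f m v).2.2 = v.2.2 ∧
      B f (PsiFM e B Θ f m v).2.1 = B f v.2.1 ∧
      B Θ (PsiFM e B Θ f m v).2.1 =
        B Θ v.2.1 - m * (v.2.2 + e * (v.1 - m * B f v.2.1)) -
          e / 2 * B f v.2.1 * m ^ 2 := by
  rintro ⟨n, D, t⟩ m
  have hfΘ : B f Θ = 1 := by rw [hsymm]; exact hΘf
  simp only [PsiFM, PhiFM, twistFM, dualFM, map_add, map_neg, map_smul,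
    map_sub, LinearMap.smul_apply, smul_eq_mul, hΘΘ, hΘf, hff, hfΘ]
  refine ⟨by ring, by ring, by ring, by ring⟩
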